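/- Preservation for references with stores: if ∅ | Σ ⊢ t : T, μ is well typed w.r.t. Σ, and t | μ ⟶ t' | μ', then there exists a store typing Σ' ⊇ Σ such that ∅ | Σ' ⊢ t' : T and μ' is well typed w.r.t. Σ'. -/

import Mathlib

/-- Types: unit, function types, and reference types T ref. -/
inductive Ty : Type where
  | unit : Ty
  | arrow : Ty → Ty → Ty
  | ref : Ty → Ty
deriving DecidableEq

/-- Terms: the lambda calculus extended with unit, `ref t`, dereference `$t`,
assignment `t₁ := t₂`, and store locations. -/
inductive Tm : Type where
  | var : String → Tm
  | abs : String → Ty → Tm → Tm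
  | app : Tm → Tm → Tm
  | unit : Tm
  | ref : Tm → Tm
  | deref : Tm → Tm
  | assign : Tm → Tm → Tm
  | loc : Nat → Tm

/-- Values: unit, abstractions, and store locations. -/
inductive Value : Tm → Prop where
  | unit : Value .unit
  | abs : ∀ x T t, Value (.abs x T t)
  | loc : ∀ l, Value (.loc l)

def Ctx : Type := String → Option Ty

def Ctx.update (Γ : Ctx) (x : String) (T : Ty) : Ctx :=
  fun y => if y = x then some T else Γ y

def emptyCtx : Ctx := fun _ => none

/-- Stores map locations to terms (which will be values). -/
abbrev Store : Type := List Tm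

/-- Store typings map locations to types. -/
abbrev StoreTy : Type := List Ty

/-- The typing judgment Γ | S ⊢ t : T with rules T-Var, T-Abs, T-App, T-Unit,
T-Ref, T-Deref, T-Assign, T-Loc. -/
inductive HasType : Ctx → StoreTy → Tm → Ty → Prop where
  | var : ∀ Γ S x T, Γ x = some T → HasType Γ S (.var x) T
  | abs : ∀ Γ S x T₁ T₂ t₂, HasType (Ctx.update Γ x T₁) S t₂ T₂ →
      HasType Γ S (.abs x T₁ t₂) (.arrow T₁ T₂)
  | app : ∀ Γ S t₁ t₂ T₁₁ T₁₂, HasType Γ S t₁ (.arrow T₁₁ T₁₂) → HasType Γ S t₂ T₁₁ →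
      HasType Γ S (.app t₁ t₂) T₁₂
  | unit : ∀ Γ S, HasType Γ S .unit .unit
  | ref : ∀ Γ S t T, HasType Γ S t T → HasType Γ S (.ref t) (.ref T)
  | deref : ∀ Γ S t T, HasType Γ S t (.ref T) → HasType Γ S (.deref t) T
  | assign : ∀ Γ S t₁ t₂ T, HasType Γ S t₁ (.ref T) → HasType Γ S t₂ T →
      HasType Γ S (.assign t₁ t₂) .unit
  | loc : ∀ Γ (S : StoreTy) l (h : l < S.length), HasType Γ S (.loc l) (.ref S[l])

/-- A store μ is well typed with respect to a store typing S: same domain, and each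
stored term is a value of the corresponding type. -/
def StoreWellTyped (μ : Store) (S : StoreTy) : Prop :=
  μ.length = S.length ∧
  ∀ l (h₁ : l < μ.length) (h₂ : l < S.length), Value μ[l] ∧ HasType emptyCtx S μ[l] S[l]

def subst (x : String) (s : Tm) : Tm → Tm
  | .var y => if y = x then s else .var y
  | .abs y T t => if y = x then .abs y T t else .abs y T (subst x s t)
  | .app t₁ t₂ => .app (subst x s t₁) (subst x s t₂)
  | .unit => .unit
  | .ref t => .ref (subst x s t)
  | .deref t => .deref (subst x s t)
  | .assign t₁ t₂ => .assign (subst x s t₁) (subst x s t₂)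
  | .loc l => .loc l

/-- Small-step evaluation over configurations t | μ. -/
inductive Step : Tm → Store → Tm → Store → Prop where
  | app1 : ∀ t₁ t₁' t₂ μ μ', Step t₁ μ t₁' μ' → Step (.app t₁ t₂) μ (.app t₁' t₂) μ'
  | app2 : ∀ v₁ t₂ t₂' μ μ', Value v₁ → Step t₂ μ t₂' μ' → Step (.app v₁ t₂) μ (.app v₁ t₂') μ'
  | appAbs : ∀ x T t₁ v μ, Value v → Step (.app (.abs x T t₁) v) μ (subst x v t₁) μ
  | refCong : ∀ t t' μ μ', Step t μ t' μ' → Step (.ref t) μ (.ref t') μ'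
  | refV : ∀ v μ, Value v → Step (.ref v) μ (.loc μ.length) (μ ++ [v])
  | derefCong : ∀ t t' μ μ', Step t μ t' μ' → Step (.deref t) μ (.deref t') μ'
  | derefLoc : ∀ (μ : Store) l (h : l < μ.length), Step (.deref (.loc l)) μ μ[l] μ
  | assign1 : ∀ t₁ t₁' t₂ μ μ', Step t₁ μ t₁' μ' → Step (.assign t₁ t₂) μ (.assign t₁' t₂) μ'
  | assign2 : ∀ v₁ t₂ t₂' μ μ', Value v₁ → Step t₂ μ t₂' μ' →
      Step (.assign v₁ t₂) μ (.assign v₁ t₂') μ'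
  | assign : ∀ l v (μ : Store), Value v → l < μ.length →
      Step (.assign (.loc l) v) μ .unit (μ.set l v)

/-! Induction on the step. A congruence step may allocate, so the typing of the untouched
subterms has to be transported along the extended store typing (weakening in the store
typing); β-reduction is the substitution lemma; `ref v` extends the store typing by the type
of `v`; assignment keeps the store typing because the new value has the type of the cell. -/

theorem HasType.weaken_storeTy {Γ : Ctx} {S S' : StoreTy} {t : Tm} {T : Ty}
    (h : HasType Γ S t T) (hS : S <+: S') : HasType Γ S' t T := by
  induction h with
  | var _ _ _ _ hx => exact .var _ _ _ _ hx
  | abs _ _ _ _ _ _ _ ih => exact .abs _ _ _ _ _ _ (ih hS)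
  | app _ _ _ _ _ _ _ _ ih₁ ih₂ => exact .app _ _ _ _ _ _ (ih₁ hS) (ih₂ hS)
  | unit => exact .unit _ _
  | ref _ _ _ _ _ ih => exact .ref _ _ _ _ (ih hS)
  | deref _ _ _ _ _ ih => exact .deref _ _ _ _ (ih hS)
  | assign _ _ _ _ _ _ _ ih₁ ih₂ => exact .assign _ _ _ _ _ (ih₁ hS) (ih₂ hS)
  | loc _ _ l hl =>
    rw [hS.getElem hl]
    exact .loc _ _ _ (hl.trans_le hS.length_le)

theorem HasType.weaken_ctx {Γ Γ' : Ctx} {S : StoreTy} {t : Tm} {T : Ty}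
    (h : HasType Γ S t T) (hΓ : ∀ x U, Γ x = some U → Γ' x = some U) :
    HasType Γ' S t T := by
  induction h generalizing Γ' with
  | var _ _ x _ hx => exact .var _ _ _ _ (hΓ x _ hx)
  | abs _ _ x _ _ _ _ ih =>
    refine .abs _ _ _ _ _ _ (ih fun y U hy => ?_)
    by_cases hyx : y = x <;> simp_all [Ctx.update]
  | app _ _ _ _ _ _ _ _ ih₁ ih₂ => exact .app _ _ _ _ _ _ (ih₁ hΓ) (ih₂ hΓ)
  | unit => exact .unit _ _
  | ref _ _ _ _ _ ih => exact .ref _ _ _ _ (ih hΓ)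
  | deref _ _ _ _ _ ih => exact .deref _ _ _ _ (ih hΓ)
  | assign _ _ _ _ _ _ _ ih₁ ih₂ => exact .assign _ _ _ _ _ (ih₁ hΓ) (ih₂ hΓ)
  | loc _ _ _ hl => exact .loc _ _ _ hl

theorem HasType.of_emptyCtx {Γ : Ctx} {S : StoreTy} {t : Tm} {T : Ty}
    (h : HasType emptyCtx S t T) : HasType Γ S t T :=
  h.weaken_ctx fun _ _ hx => nomatch hx

@[simp]
theorem Ctx.update_update_self (Γ : Ctx) (x : String) (T U : Ty) :
    (Γ.update x U).update x T = Γ.update x T := by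
  funext y
  by_cases hyx : y = x <;> simp [Ctx.update, hyx]

theorem Ctx.update_comm (Γ : Ctx) {x y : String} (hxy : x ≠ y) (T U : Ty) :
    (Γ.update x U).update y T = (Γ.update y T).update x U := by
  funext z
  by_cases hzx : z = x <;> by_cases hzy : z = y <;> simp_all [Ctx.update]

theorem HasType.subst {Γ : Ctx} {S : StoreTy} {x : String} {U : Ty} {v t : Tm} {T : Ty}
    (ht : HasType (Γ.update x U) S t T) (hv : HasType emptyCtx S v U) :
    HasType Γ S (subst x v t) T := by
  induction t generalizing Γ T with
  | var y =>
    cases ht with | var _ _ _ _ hy =>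
    unfold _root_.subst
    split_ifs with hyx
    · subst hyx
      obtain rfl : U = T := by simpa [Ctx.update] using hy
      exact hv.of_emptyCtx
    · exact .var _ _ _ _ (by simpa [Ctx.update, hyx] using hy)
  | abs y T₁ t ih =>
    cases ht with | abs _ _ _ _ _ _ hb =>
    unfold _root_.subst
    split_ifs with hyx
    · subst hyx
      exact .abs _ _ _ _ _ _ (by simpa using hb)
    · rw [Ctx.update_comm Γ (Ne.symm hyx)] at hb
      exact .abs _ _ _ _ _ _ (ih hb)
  | app _ _ ih₁ ih₂ =>
    cases ht with | app _ _ _ _ _ _ h₁ h₂ => exact .app _ _ _ _ _ _ (ih₁ h₁) (ih₂ h₂)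
  | unit => cases ht; exact .unit _ _
  | ref _ ih => cases ht with | ref _ _ _ _ h => exact .ref _ _ _ _ (ih h)
  | deref _ ih => cases ht with | deref _ _ _ _ h => exact .deref _ _ _ _ (ih h)
  | assign _ _ ih₁ ih₂ =>
    cases ht with | assign _ _ _ _ _ h₁ h₂ => exact .assign _ _ _ _ _ (ih₁ h₁) (ih₂ h₂)
  | loc => cases ht with | loc _ _ _ hl => exact .loc _ _ _ hl

theorem HasType.loc_length_append (Γ : Ctx) (S : StoreTy) (T : Ty) :
    HasType Γ (S ++ [T]) (.loc S.length) (.ref T) := by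
  simpa using HasType.loc Γ (S ++ [T]) S.length (by simp)

theorem StoreWellTyped.append {μ : Store} {S : StoreTy} {v : Tm} {T : Ty}
    (hμ : StoreWellTyped μ S) (hv : Value v) (hvT : HasType emptyCtx S v T) :
    StoreWellTyped (μ ++ [v]) (S ++ [T]) := by
  have hS : S <+: S ++ [T] := List.prefix_append S [T]
  refine ⟨by simp [hμ.1], fun l h₁ h₂ => ?_⟩
  rcases Nat.lt_or_ge l μ.length with hl | hl
  · have hlS : l < S.length := hμ.1 ▸ hl
    rw [List.getElem_append_left hl, List.getElem_append_left hlS]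
    exact ⟨(hμ.2 l hl hlS).1, (hμ.2 l hl hlS).2.weaken_storeTy hS⟩
  · obtain rfl : l = μ.length := by simp at h₁; omega
    simp only [List.getElem_concat_length, hμ.1]
    exact ⟨hv, hvT.weaken_storeTy hS⟩

theorem StoreWellTyped.set {μ : Store} {S : StoreTy} {l : ℕ} {v : Tm} (hμ : StoreWellTyped μ S)
    (hl : l < S.length) (hv : Value v) (hvT : HasType emptyCtx S v S[l]) :
    StoreWellTyped (μ.set l v) S := by
  refine ⟨by simp [hμ.1], fun k h₁ h₂ => ?_⟩
  by_cases hlk : l = k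
  · subst hlk
    rw [List.getElem_set_self]
    exact ⟨hv, hvT⟩
  · rw [List.getElem_set_ne hlk]
    exact hμ.2 k (by simpa using h₁) h₂

/-- Preservation for references: stepping a well-typed configuration yields a term
well typed at the same type under some extension S' of the store typing, with the
new store well typed w.r.t. S'. -/
theorem preservation_ref (t t' : Tm) (T : Ty) (S : StoreTy) (μ μ' : Store)
    (ht : HasType emptyCtx S t T) (hμ : StoreWellTyped μ S)
    (hs : Step t μ t' μ') :
    ∃ S' : StoreTy, S <+: S' ∧ HasType emptyCtx S' t' T ∧ StoreWellTyped μ' S' := by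
  induction hs generalizing T with
  | app1 _ _ _ _ _ _ ih =>
    cases ht with | app _ _ _ _ _ _ h₁ h₂ =>
    obtain ⟨S', hS, h₁', hμ'⟩ := ih _ h₁ hμ
    exact ⟨S', hS, .app _ _ _ _ _ _ h₁' (h₂.weaken_storeTy hS), hμ'⟩
  | app2 _ _ _ _ _ _ _ ih =>
    cases ht with | app _ _ _ _ _ _ h₁ h₂ =>
    obtain ⟨S', hS, h₂', hμ'⟩ := ih _ h₂ hμ
    exact ⟨S', hS, .app _ _ _ _ _ _ (h₁.weaken_storeTy hS) h₂', hμ'⟩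
  | appAbs =>
    cases ht with | app _ _ _ _ _ _ h₁ h₂ =>
    cases h₁ with | abs _ _ _ _ _ _ hb => exact ⟨S, List.prefix_rfl, hb.subst h₂, hμ⟩
  | refCong _ _ _ _ _ ih =>
    cases ht with | ref _ _ _ _ h =>
    obtain ⟨S', hS, h', hμ'⟩ := ih _ h hμ
    exact ⟨S', hS, .ref _ _ _ _ h', hμ'⟩
  | refV _ _ hv =>
    cases ht with | ref _ _ _ T₀ h =>
    refine ⟨S ++ [T₀], List.prefix_append S [T₀], ?_, hμ.append hv h⟩
    simpa only [hμ.1] using HasType.loc_length_append emptyCtx S T₀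
  | derefCong _ _ _ _ _ ih =>
    cases ht with | deref _ _ _ _ h =>
    obtain ⟨S', hS, h', hμ'⟩ := ih _ h hμ
    exact ⟨S', hS, .deref _ _ _ _ h', hμ'⟩
  | derefLoc _ l hlμ =>
    cases ht with | deref _ _ _ _ h =>
    cases h with | loc _ _ _ hlS => exact ⟨S, List.prefix_rfl, (hμ.2 l hlμ hlS).2, hμ⟩
  | assign1 _ _ _ _ _ _ ih =>
    cases ht with | assign _ _ _ _ _ h₁ h₂ =>
    obtain ⟨S', hS, h₁', hμ'⟩ := ih _ h₁ hμ
    exact ⟨S', hS, .assign _ _ _ _ _ h₁' (h₂.weaken_storeTy hS), hμ'⟩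
  | assign2 _ _ _ _ _ _ _ ih =>
    cases ht with | assign _ _ _ _ _ h₁ h₂ =>
    obtain ⟨S', hS, h₂', hμ'⟩ := ih _ h₂ hμ
    exact ⟨S', hS, .assign _ _ _ _ _ (h₁.weaken_storeTy hS) h₂', hμ'⟩
  | assign _ _ _ hv =>
    cases ht with | assign _ _ _ _ _ h₁ h₂ =>
    cases h₁ with | loc _ _ _ hlS => exact ⟨S, List.prefix_rfl, .unit _ _, hμ.set hlS hv h₂⟩
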